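/- arXiv:2112.06014 — 4 statements merged into one kernel-verified Lean document; each statement's English description precedes it below -/
import Mathlib

section
/- Let (X, μ) be a measure space, let a, b, v : X → ℝ be functions in L²(μ) with a(x) ≤ b(x) for μ-almost every x, and let β > 0. Then β ∫_X (min(v−a, 0) + max(v−b, 0)) · v dμ ≥ β ‖v‖²_{L²(μ)} − β ‖max(|a|, |b|)‖_{L²(μ)} · ‖v‖_{L²(μ)}. -/
/-!
Pointwise, `(min (v - a) 0 + max (v - b) 0) * v ≥ v ^ 2 - max |a| |b| * |v|` whenever `a ≤ b`:
outside `[a, b]` the penalty is `(v - a) v` or `(v - b) v`, and inside it vanishes while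
`|v| ≤ max |a| |b|`. Integrating and bounding `∫ max |a| |b| * |v|` by Cauchy–Schwarz gives the
estimate.
-/

open MeasureTheory

theorem sq_sub_max_abs_mul_abs_le_penalty_mul {a b v : ℝ} (hab : a ≤ b) :
    v ^ 2 - max |a| |b| * |v| ≤ (min (v - a) 0 + max (v - b) 0) * v := by
  have h_abs_mul {c : ℝ} (hc : |c| ≤ max |a| |b|) : c * v ≤ max |a| |b| * |v| :=
    (le_abs_self _).trans <| (abs_mul c v).trans_le <| by gcongr
  have h_av := h_abs_mul (le_max_left _ _)
  have h_bv := h_abs_mul (le_max_right _ _)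
  rcases le_total v a with hva | hav
  · rw [min_eq_left (show v - a ≤ 0 by linarith), max_eq_right (show v - b ≤ 0 by linarith)]
    linarith
  rcases le_total v b with hvb | hbv
  · rw [min_eq_right (show 0 ≤ v - a by linarith), max_eq_right (show v - b ≤ 0 by linarith),
      ← sq_abs]
    nlinarith [abs_le_max_abs_abs hav hvb, abs_nonneg v]
  · rw [min_eq_right (show 0 ≤ v - a by linarith), max_eq_left (show 0 ≤ v - b by linarith)]
    linarith

theorem integral_abs_mul_abs_le_sqrt_mul_sqrt {X : Type*} [MeasurableSpace X] {μ : Measure X}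
    {f g : X → ℝ} (hf : MemLp f 2 μ) (hg : MemLp g 2 μ) :
    ∫ x, |f x| * |g x| ∂μ ≤ √(∫ x, f x ^ 2 ∂μ) * √(∫ x, g x ^ 2 ∂μ) := by
  have := integral_mul_norm_le_Lp_mul_Lq (p := 2) (q := 2) Real.HolderConjugate.two_two
    (by simpa using hf) (by simpa using hg)
  simpa [Real.sqrt_eq_rpow, sq_abs] using this

/-- Coercivity of the penalty term: if `a, b, v ∈ L²(μ)` with `a ≤ b` a.e. and `β > 0`, then
`β ∫ (min(v−a,0) + max(v−b,0))·v dμ ≥ β‖v‖²_{L²} − β‖max(|a|,|b|)‖_{L²}·‖v‖_{L²}`. -/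
theorem penalty_term_coercive {X : Type*} [MeasurableSpace X] (μ : Measure X)
    (a b v : X → ℝ) (ha : MemLp a 2 μ) (hb : MemLp b 2 μ) (hv : MemLp v 2 μ)
    (hab : ∀ᵐ x ∂μ, a x ≤ b x) (β : ℝ) (hβ : 0 < β) :
    β * ∫ x, (min (v x - a x) 0 + max (v x - b x) 0) * v x ∂μ ≥
      β * ∫ x, (v x) ^ 2 ∂μ -
        β * Real.sqrt (∫ x, (max |a x| |b x|) ^ 2 ∂μ) *
          Real.sqrt (∫ x, (v x) ^ 2 ∂μ) := by
  set M : X → ℝ := fun x => max |a x| |b x|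
  have hM : MemLp M 2 μ := ha.abs.sup hb.abs
  have hpenalty : MemLp (fun x => min (v x - a x) 0 + max (v x - b x) 0) 2 μ :=
    ((hv.sub ha).inf MemLp.zero').add ((hv.sub hb).sup MemLp.zero')
  have hMv : Integrable (fun x => M x * |v x|) μ := hM.integrable_mul hv.abs
  have h_integrated : ∫ x, v x ^ 2 ∂μ - ∫ x, M x * |v x| ∂μ ≤
      ∫ x, (min (v x - a x) 0 + max (v x - b x) 0) * v x ∂μ := by
    rw [← integral_sub hv.integrable_sq hMv]
    exact integral_mono_ae (hv.integrable_sq.sub hMv)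
      (hpenalty.integrable_mul hv) (hab.mono fun x hx => sq_sub_max_abs_mul_abs_le_penalty_mul hx)
  have h_cauchy_schwarz : ∫ x, M x * |v x| ∂μ ≤ √(∫ x, M x ^ 2 ∂μ) * √(∫ x, v x ^ 2 ∂μ) := by
    simpa [M, abs_of_nonneg (le_max_of_le_left (abs_nonneg _))] using
      integral_abs_mul_abs_le_sqrt_mul_sqrt hM hv
  have h_lower := (sub_le_sub_left h_cauchy_schwarz _).trans h_integrated
  have := mul_le_mul_of_nonneg_left h_lower hβ.le
  linarith
end

section
/- Let p > 1, let α, γ, β ∈ ℝ with β(β+1−α) > 0, let R > 0, δ > 0, and let B be a real-valued function continuous at R with B(R) > 0. Suppose ψ : (R−δ, R] → ℝ is continuous with ψ(R) > 0, twice differentiable on (R−δ, R), satisfies (R−x)² ψ″(x) + (2β−α)(R−x) ψ′(x) + β(β+1−α) ψ(x) = B(x)(R−x)^{2+γ−α−β(p−1)} ψ(x)^p for all x ∈ (R−δ, R), and lim_{x→R⁻} (R−x)² ψ″(x) = 0 and lim_{x→R⁻} (R−x) ψ′(x) = 0. Then necessarily β = (2+γ−α)/(p−1) and ψ(R) = (β(β+1−α)/B(R))^{1/(p−1)}.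 -/
open Set Filter

/-- Blow-up rate computation: if `ψ` is continuous on `(R−δ, R]` with `ψ(R) > 0`, twice
differentiable on `(R−δ, R)`, satisfies
`(R−x)²ψ″ + (2β−α)(R−x)ψ′ + β(β+1−α)ψ = B(x)(R−x)^{2+γ−α−β(p−1)} ψ^p` there, and
`(R−x)²ψ″(x) → 0`, `(R−x)ψ′(x) → 0` as `x → R⁻`, then necessarily
`β = (2+γ−α)/(p−1)` and `ψ(R) = (β(β+1−α)/B(R))^{1/(p−1)}`. -/
theorem blow_up_rate_forced
    (p α γ β R δ : ℝ) (hp : 1 < p) (hβ : 0 < β * (β + 1 - α)) (hR : 0 < R) (hδ : 0 < δ)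
    (B : ℝ → ℝ) (hB_cont : ContinuousAt B R) (hBR : 0 < B R)
    (ψ : ℝ → ℝ) (hψ_cont : ContinuousOn ψ (Ioc (R - δ) R)) (hψR : 0 < ψ R)
    (hψ_diff : ∀ x ∈ Ioo (R - δ) R,
      DifferentiableAt ℝ ψ x ∧ DifferentiableAt ℝ (deriv ψ) x)
    (heq : ∀ x ∈ Ioo (R - δ) R,
      (R - x) ^ 2 * deriv (deriv ψ) x + (2 * β - α) * (R - x) * deriv ψ x
          + β * (β + 1 - α) * ψ x
        = B x * (R - x) ^ (2 + γ - α - β * (p - 1)) * ψ x ^ p)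
    (hlim2 : Tendsto (fun x => (R - x) ^ 2 * deriv (deriv ψ) x)
      (nhdsWithin R (Iio R)) (nhds 0))
    (hlim1 : Tendsto (fun x => (R - x) * deriv ψ x)
      (nhdsWithin R (Iio R)) (nhds 0)) :
    β = (2 + γ - α) / (p - 1) ∧
      ψ R = (β * (β + 1 - α) / B R) ^ (1 / (p - 1)) := by
  have hpne : p - 1 ≠ 0 := sub_ne_zero.mpr (ne_of_gt hp)
  set e := 2 + γ - α - β * (p - 1) with he_def
  have hRδ : R - δ < R := by linarith
  have hmem : Ioo (R - δ) R ∈ nhdsWithin R (Iio R) :=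
    Ioo_mem_nhdsLT_of_mem ⟨hRδ, le_refl R⟩
  have hψlim : Tendsto ψ (nhdsWithin R (Iio R)) (nhds (ψ R)) :=
    (hψ_cont R (right_mem_Ioc.mpr hRδ)).mono_left
      (nhdsWithin_le_of_mem (mem_of_superset hmem Ioo_subset_Ioc_self))
  set L := β * (β + 1 - α) * ψ R with hL_def
  have hLpos : 0 < L := mul_pos hβ hψR
  have hL : Tendsto (fun x => (R - x) ^ 2 * deriv (deriv ψ) x
      + (2 * β - α) * (R - x) * deriv ψ x + β * (β + 1 - α) * ψ x)
      (nhdsWithin R (Iio R)) (nhds L) := by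
    have h := (hlim2.add (hlim1.const_mul (2 * β - α))).add
      (hψlim.const_mul (β * (β + 1 - α)))
    simp only [mul_zero, add_zero, zero_add] at h
    convert h using 2 with x
    ring
  have hRHS : Tendsto (fun x => B x * (R - x) ^ e * ψ x ^ p)
      (nhdsWithin R (Iio R)) (nhds L) := by
    refine hL.congr' ?_
    filter_upwards [hmem] with x hx using heq x hx
  have hBψ : Tendsto (fun x => B x * ψ x ^ p) (nhdsWithin R (Iio R))
      (nhds (B R * ψ R ^ p)) :=
    (hB_cont.tendsto.mono_left nhdsWithin_le_nhds).mul
      (hψlim.rpow_const (Or.inl (ne_of_gt hψR)))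
  have hBψpos : 0 < B R * ψ R ^ p := mul_pos hBR (Real.rpow_pos_of_pos hψR p)
  have hpow : Tendsto (fun x => (R - x) ^ e) (nhdsWithin R (Iio R))
      (nhds (L / (B R * ψ R ^ p))) := by
    have hdiv := hRHS.div hBψ (ne_of_gt hBψpos)
    refine hdiv.congr' ?_
    have hev : ∀ᶠ x in nhdsWithin R (Iio R), 0 < B x * ψ x ^ p :=
      hBψ.eventually (eventually_gt_nhds hBψpos)
    filter_upwards [hev] with x hx
    show B x * (R - x) ^ e * ψ x ^ p / (B x * ψ x ^ p) = (R - x) ^ e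
    rw [div_eq_iff (ne_of_gt hx)]
    ring
  have hcpos : 0 < L / (B R * ψ R ^ p) := div_pos hLpos hBψpos
  have hRx : Tendsto (fun x => R - x) (nhdsWithin R (Iio R)) (nhdsWithin 0 (Ioi 0)) := by
    apply tendsto_nhdsWithin_of_tendsto_nhds_of_eventually_within
    · have : Tendsto (fun x : ℝ => R - x) (nhds R) (nhds (R - R)) :=
        (tendsto_const_nhds.sub tendsto_id)
      simpa using this.mono_left nhdsWithin_le_nhds
    · filter_upwards [self_mem_nhdsWithin] with x hx
      exact sub_pos.mpr (mem_Iio.mp hx)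
  have hloglim : Tendsto (fun x => e * Real.log (R - x)) (nhdsWithin R (Iio R))
      (nhds (Real.log (L / (B R * ψ R ^ p)))) := by
    have hcont : ContinuousAt Real.log (L / (B R * ψ R ^ p)) :=
      Real.continuousAt_log (ne_of_gt hcpos)
    have h := hcont.tendsto.comp hpow
    refine h.congr' ?_
    filter_upwards [self_mem_nhdsWithin] with x hx
    show Real.log ((R - x) ^ e) = e * Real.log (R - x)
    exact Real.log_rpow (sub_pos.mpr (mem_Iio.mp hx)) e
  have hlogbot : Tendsto (fun x => Real.log (R - x)) (nhdsWithin R (Iio R)) atBot :=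
    Real.tendsto_log_nhdsGT_zero.comp hRx
  have he0 : e = 0 := by
    by_contra he
    rcases lt_or_gt_of_ne he with h | h
    · have : Tendsto (fun x => e * Real.log (R - x)) (nhdsWithin R (Iio R)) atTop :=
        (tendsto_const_mul_atTop_of_neg h).mpr hlogbot
      exact not_tendsto_nhds_of_tendsto_atTop this _ hloglim
    · have : Tendsto (fun x => e * Real.log (R - x)) (nhdsWithin R (Iio R)) atBot :=
        (tendsto_const_mul_atBot_of_pos h).mpr hlogbot
      exact not_tendsto_nhds_of_tendsto_atBot this _ hloglim
  have hc1 : L / (B R * ψ R ^ p) = 1 := by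
    have h1 : Tendsto (fun _ : ℝ => (1 : ℝ)) (nhdsWithin R (Iio R))
        (nhds (L / (B R * ψ R ^ p))) := by
      simpa [he0, Real.rpow_zero] using hpow
    exact (tendsto_nhds_unique h1 tendsto_const_nhds)
  have hLB : L = B R * ψ R ^ p := by
    field_simp at hc1
    exact hc1
  constructor
  · have : β * (p - 1) = 2 + γ - α := by
      have := he0
      rw [he_def] at this
      linarith
    field_simp
    linarith [this]
  · have hkey : β * (β + 1 - α) / B R = ψ R ^ (p - 1) := by
      have h1 : ψ R ^ (p - 1) = ψ R ^ p / ψ R := by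
        rw [Real.rpow_sub hψR, Real.rpow_one]
      rw [h1, eq_div_iff (ne_of_gt hψR), div_mul_eq_mul_div,
        div_eq_iff (ne_of_gt hBR)]
      rw [hL_def] at hLB
      linarith [hLB]
    rw [hkey, ← Real.rpow_mul hψR.le, mul_one_div_cancel hpne, Real.rpow_one]
end

section
/- Fix an integer N ≥ 1, reals p > 1, R > 0, and α, γ with γ − α ≥ 0, a continuous function a : [0,R] → ℝ with a(r) > 0 for all r, set β := (2+γ−α)/(p−1), and assume β + 1 − α > 0; set K := (β(β+1−α)/a(R))^{1/(p−1)}. For each ε > 0, set B̄ := (1+ε) K. Then there exists A_ε > 0 such that for every A ≥ A_ε, the function ψ̄(r) := A + B̄ (r/R)² (R−r)^{−β} satisfies ψ̄″(r) + ((N−1)/r − α/(R−r)) ψ̄′(r) ≤ a(r)(R−r)^{γ−α} ψ̄(r)^p for all r ∈ (0,R). -/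
open Set

lemma rsub_hasDerivAt (R c : ℝ) {s : ℝ} (h : s < R) :
    HasDerivAt (fun x : ℝ => (R - x) ^ c) (-(c * (R - s) ^ (c - 1))) s := by
  have h0 : R - s ≠ 0 := sub_ne_zero.2 (ne_of_gt h)
  have h1 : HasDerivAt (fun x : ℝ => R - x) (-1) s := (hasDerivAt_id s).const_sub R
  have h2 := (Real.hasDerivAt_rpow_const (p := c) (Or.inl h0)).comp s h1
  exact h2.congr_deriv (by ring)

lemma psi_hasDerivAt (R β B A : ℝ) {s : ℝ} (h : s < R) :
    HasDerivAt (fun x : ℝ => A + B * (x / R) ^ 2 * (R - x) ^ (-β))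
      (B * (2 * s / R ^ 2 * (R - s) ^ (-β) + (s / R) ^ 2 * (β * (R - s) ^ (-β - 1)))) s := by
  have hg : HasDerivAt (fun x : ℝ => (R - x) ^ (-β)) (β * (R - s) ^ (-β - 1)) s := by
    have h2 := rsub_hasDerivAt R (-β) h
    convert h2 using 1
    ring
  have hf : HasDerivAt (fun x : ℝ => B * (x / R) ^ 2) (B * (2 * (s / R) * (1 / R))) s := by
    have h3 := (((hasDerivAt_id s).div_const R).pow 2).const_mul B
    exact h3.congr_deriv (by norm_num)
  have h4 := (hf.mul hg).const_add A
  exact h4.congr_deriv (by ring)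

lemma psi_hasDerivAt2 (R β B : ℝ) {s : ℝ} (h : s < R) :
    HasDerivAt
      (fun x : ℝ =>
        B * (2 * x / R ^ 2 * (R - x) ^ (-β) + (x / R) ^ 2 * (β * (R - x) ^ (-β - 1))))
      (B * (2 / R ^ 2 * (R - s) ^ (-β) + 4 * s / R ^ 2 * (β * (R - s) ^ (-β - 1)) +
        (s / R) ^ 2 * (β * (β + 1) * (R - s) ^ (-β - 2)))) s := by
  have hg1 : HasDerivAt (fun x : ℝ => (R - x) ^ (-β)) (β * (R - s) ^ (-β - 1)) s := by
    have h2 := rsub_hasDerivAt R (-β) h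
    convert h2 using 1
    ring
  have hg2 : HasDerivAt (fun x : ℝ => (R - x) ^ (-β - 1)) ((β + 1) * (R - s) ^ (-β - 2)) s := by
    have h2 := rsub_hasDerivAt R (-β - 1) h
    have e : (-β - 1 - 1 : ℝ) = -β - 2 := by ring
    rw [e] at h2
    convert h2 using 1
    ring
  have hu : HasDerivAt (fun x : ℝ => 2 * x / R ^ 2) (2 / R ^ 2) s := by
    have h3 := ((hasDerivAt_id s).const_mul 2).div_const (R ^ 2)
    exact h3.congr_deriv (by simp)
  have hv : HasDerivAt (fun x : ℝ => (x / R) ^ 2) (2 * (s / R) * (1 / R)) s := by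
    have h3 := ((hasDerivAt_id s).div_const R).pow 2
    exact h3.congr_deriv (by norm_num)
  have hw : HasDerivAt (fun x : ℝ => β * (R - x) ^ (-β - 1))
      (β * ((β + 1) * (R - s) ^ (-β - 2))) s := hg2.const_mul β
  have h5 := ((hu.mul hg1).add (hv.mul hw)).const_mul B
  exact h5.congr_deriv (by ring)

set_option maxHeartbeats 1000000 in
/-- Existence of a supersolution: with `β = (2+γ−α)/(p−1)`, `β+1−α > 0`,
`K = (β(β+1−α)/a(R))^{1/(p−1)}` and `B̄ = (1+ε)K`, there is `A_ε > 0` such that for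
every `A ≥ A_ε` the function `ψ̄(r) = A + B̄(r/R)²(R−r)^{−β}` satisfies
`ψ̄″ + ((N−1)/r − α/(R−r))ψ̄′ ≤ a(r)(R−r)^{γ−α}ψ̄^p` on `(0,R)`. -/
theorem exists_supersolution
    (N : ℕ) (hN : 1 ≤ N) (p R α γ : ℝ) (hp : 1 < p) (hR : 0 < R) (hγα : 0 ≤ γ - α)
    (a : ℝ → ℝ) (ha_cont : ContinuousOn a (Icc 0 R)) (ha_pos : ∀ r ∈ Icc 0 R, 0 < a r)
    (β : ℝ) (hβ : β = (2 + γ - α) / (p - 1)) (hβα : 0 < β + 1 - α)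
    (K : ℝ) (hK : K = (β * (β + 1 - α) / a R) ^ (1 / (p - 1))) :
    ∀ ε > (0 : ℝ), ∃ Aε > (0 : ℝ), ∀ A ≥ Aε, ∀ r ∈ Ioo 0 R,
      deriv (deriv (fun s => A + (1 + ε) * K * (s / R) ^ 2 * (R - s) ^ (-β))) r
          + (((N : ℝ) - 1) / r - α / (R - r)) *
              deriv (fun s => A + (1 + ε) * K * (s / R) ^ 2 * (R - s) ^ (-β)) r
        ≤ a r * (R - r) ^ (γ - α) *
            (A + (1 + ε) * K * (r / R) ^ 2 * (R - r) ^ (-β)) ^ p := by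
  intro ε hε
  set B := (1 + ε) * K with hBdef
  have hp1 : (0:ℝ) < p - 1 := by linarith
  have hp0 : (0:ℝ) < p := by linarith
  have hβpos : 0 < β := by
    rw [hβ]; exact div_pos (by linarith) hp1
  have haR : 0 < a R := ha_pos R ⟨hR.le, le_refl R⟩
  have hbb : 0 < β * (β + 1 - α) := mul_pos hβpos hβα
  have hbase : 0 < β * (β + 1 - α) / a R := div_pos hbb haR
  have hKpos : 0 < K := by rw [hK]; exact Real.rpow_pos_of_pos hbase _
  have hBpos : 0 < B := mul_pos (by linarith) hKpos
  have hKp : K ^ (p - 1) = β * (β + 1 - α) / a R := by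
    rw [hK, ← Real.rpow_mul hbase.le, one_div, inv_mul_cancel₀ hp1.ne', Real.rpow_one]
  have hBp : B ^ (p - 1) = (1 + ε) ^ (p - 1) * (β * (β + 1 - α) / a R) := by
    rw [hBdef, Real.mul_rpow (by linarith) hKpos.le, hKp]
  have hBpow : B ^ p = B ^ (p - 1) * B := by
    rw [← Real.rpow_add_one hBpos.ne']; congr 1; ring
  have h1ε : 1 < (1 + ε) ^ (p - 1) :=
    (Real.one_lt_rpow_iff_of_pos (by linarith)).mpr (Or.inl ⟨by linarith, hp1⟩)
  have hβ2 : β * (p - 1) = 2 + γ - α := by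
    rw [hβ]; field_simp
  have hβ3 : β * p = 2 + γ - α + β := by linear_combination hβ2
  set c1 : ℝ := ((N : ℝ) + 3) * β - 2 * α with hc1def
  -- the boundary function
  have hGR : 0 < a R * ((R / R) ^ 2) ^ p * B ^ (p - 1) -
      (2 * (N : ℝ) / R ^ 2 * (R - R) ^ 2 + R / R ^ 2 * c1 * (R - R) +
        R ^ 2 / R ^ 2 * (β * (β + 1 - α))) := by
    rw [div_self hR.ne', one_pow, Real.one_rpow, mul_one, hBp, sub_self]
    have hx : a R * ((1 + ε) ^ (p - 1) * (β * (β + 1 - α) / a R)) =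
        (1 + ε) ^ (p - 1) * (β * (β + 1 - α)) := by
      field_simp
    have hy : R ^ 2 / R ^ 2 = (1:ℝ) := div_self (pow_ne_zero 2 hR.ne')
    rw [hx, hy]
    have hmul := mul_lt_mul_of_pos_right h1ε hbb
    linarith [hmul]
  have hcont : ContinuousOn (fun x : ℝ => a x * ((x / R) ^ 2) ^ p * B ^ (p - 1) -
      (2 * (N : ℝ) / R ^ 2 * (R - x) ^ 2 + x / R ^ 2 * c1 * (R - x) +
        x ^ 2 / R ^ 2 * (β * (β + 1 - α)))) (Icc 0 R) := by
    apply ContinuousOn.sub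
    · exact (ha_cont.mul (((continuous_id.div_const R).pow 2).continuousOn.rpow_const
        (fun x _ => Or.inr hp0.le))).mul continuousOn_const
    · exact Continuous.continuousOn (by fun_prop)
  have hev2 := Filter.Tendsto.eventually (hcont R (right_mem_Icc.mpr hR.le))
    (eventually_gt_nhds hGR)
  rw [Filter.eventually_iff, Metric.mem_nhdsWithin_iff] at hev2
  obtain ⟨δ, hδpos, hsub⟩ := hev2
  have hδ'pos : 0 < min δ R := lt_min hδpos hR
  obtain ⟨r0, hr0mem, hr0min⟩ := IsCompact.exists_isMinOn isCompact_Icc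
    ⟨0, left_mem_Icc.mpr hR.le⟩ ha_cont
  have ha0 : 0 < a r0 := ha_pos r0 hr0mem
  set Tb : ℝ := 2 * (N : ℝ) + |c1| + β * (β + 1 - α) with hTbdef
  have hTbpos : 0 < Tb := by
    have : (0:ℝ) ≤ (N : ℝ) := Nat.cast_nonneg N
    have habs := abs_nonneg c1
    rw [hTbdef]; linarith [hbb]
  set d2 : ℝ := (min δ R) ^ (-β - 2 : ℝ) with hd2def
  have hd2pos : 0 < d2 := Real.rpow_pos_of_pos hδ'pos _
  set Cfull : ℝ := Tb * (B * d2) with hCfulldef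
  have hCfullpos : 0 < Cfull := mul_pos hTbpos (mul_pos hBpos hd2pos)
  set dd : ℝ := a r0 * (min δ R) ^ (γ - α) with hdddef
  have hddpos : 0 < dd := mul_pos ha0 (Real.rpow_pos_of_pos hδ'pos _)
  refine ⟨max 1 ((Cfull / dd) ^ (1 / p)), lt_of_lt_of_le one_pos (le_max_left _ _),
    fun A hA r hr => ?_⟩
  obtain ⟨hr0', hrR⟩ := hr
  have hA1 : (1:ℝ) ≤ A := le_trans (le_max_left _ _) hA
  have hApos : (0:ℝ) < A := lt_of_lt_of_le one_pos hA1
  have hs : 0 < R - r := sub_pos.2 hrR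
  have hsne : R - r ≠ 0 := hs.ne'
  have hrne : r ≠ 0 := hr0'.ne'
  have hRne : R ≠ 0 := hR.ne'
  have harpos : 0 < a r := ha_pos r ⟨hr0'.le, hrR.le⟩
  -- rewrite the derivatives
  have E1 : deriv (fun s => A + B * (s / R) ^ 2 * (R - s) ^ (-β)) r =
      B * (2 * r / R ^ 2 * (R - r) ^ (-β) + (r / R) ^ 2 * (β * (R - r) ^ (-β - 1))) :=
    (psi_hasDerivAt R β B A hrR).deriv
  have hevd : deriv (fun s => A + B * (s / R) ^ 2 * (R - s) ^ (-β)) =ᶠ[nhds r]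
      (fun s => B * (2 * s / R ^ 2 * (R - s) ^ (-β) + (s / R) ^ 2 * (β * (R - s) ^ (-β - 1)))) := by
    filter_upwards [Iio_mem_nhds hrR] with x hx
    exact (psi_hasDerivAt R β B A hx).deriv
  have E2 : deriv (deriv (fun s => A + B * (s / R) ^ 2 * (R - s) ^ (-β))) r =
      B * (2 / R ^ 2 * (R - r) ^ (-β) + 4 * r / R ^ 2 * (β * (R - r) ^ (-β - 1)) +
        (r / R) ^ 2 * (β * (β + 1) * (R - r) ^ (-β - 2))) := by
    rw [hevd.deriv_eq]
    exact (psi_hasDerivAt2 R β B hrR).deriv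
  rw [E2, E1]
  -- rpow identities
  have hE1' : (R - r) ^ (-β - 1 : ℝ) = (R - r) ^ (-β - 2 : ℝ) * (R - r) := by
    rw [← Real.rpow_add_one hsne]; congr 1; ring
  have hE0' : (R - r) ^ (-β : ℝ) = (R - r) ^ (-β - 2 : ℝ) * (R - r) ^ 2 := by
    rw [pow_two, ← mul_assoc, ← hE1', ← Real.rpow_add_one hsne]; congr 1; ring
  have hXp : (R - r) ^ (γ - α) * ((R - r) ^ (-β : ℝ)) ^ p = (R - r) ^ (-β - 2 : ℝ) := by
    rw [← Real.rpow_mul hs.le, ← Real.rpow_add hs]; congr 1; linear_combination -hβ3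
  calc B * (2 / R ^ 2 * (R - r) ^ (-β) + 4 * r / R ^ 2 * (β * (R - r) ^ (-β - 1)) +
        (r / R) ^ 2 * (β * (β + 1) * (R - r) ^ (-β - 2)))
      + (((N : ℝ) - 1) / r - α / (R - r)) *
        (B * (2 * r / R ^ 2 * (R - r) ^ (-β) + (r / R) ^ 2 * (β * (R - r) ^ (-β - 1))))
      = (2 * (N : ℝ) / R ^ 2 * (R - r) ^ 2 + r / R ^ 2 * c1 * (R - r) +
          r ^ 2 / R ^ 2 * (β * (β + 1 - α))) * (B * (R - r) ^ (-β - 2 : ℝ)) := by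
        rw [hE0', hE1']
        field_simp
        ring
    _ ≤ a r * (R - r) ^ (γ - α) * (A + B * (r / R) ^ 2 * (R - r) ^ (-β)) ^ p := by
        by_cases hnear : dist r R < δ
        · -- near the boundary
          have hGr := hsub ⟨Metric.mem_ball.mpr hnear, ⟨hr0'.le, hrR.le⟩⟩
          simp only [mem_setOf_eq] at hGr
          have hfnonneg : (0:ℝ) ≤ B * (r / R) ^ 2 * (R - r) ^ (-β : ℝ) := by positivity
          have hrp : (B * (r / R) ^ 2 * (R - r) ^ (-β : ℝ)) ^ p ≤
              (A + B * (r / R) ^ 2 * (R - r) ^ (-β : ℝ)) ^ p :=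
            Real.rpow_le_rpow hfnonneg (by linarith) hp0.le
          have hexp : a r * ((r / R) ^ 2) ^ p * B ^ (p - 1) * (B * (R - r) ^ (-β - 2 : ℝ)) =
              a r * (R - r) ^ (γ - α) * (B * (r / R) ^ 2 * (R - r) ^ (-β : ℝ)) ^ p := by
            rw [Real.mul_rpow (mul_nonneg hBpos.le (sq_nonneg _)) (Real.rpow_nonneg hs.le _),
              Real.mul_rpow hBpos.le (sq_nonneg _), hBpow, ← hXp]
            ring
          calc (2 * (N : ℝ) / R ^ 2 * (R - r) ^ 2 + r / R ^ 2 * c1 * (R - r) +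
                r ^ 2 / R ^ 2 * (β * (β + 1 - α))) * (B * (R - r) ^ (-β - 2 : ℝ))
              ≤ (a r * ((r / R) ^ 2) ^ p * B ^ (p - 1)) * (B * (R - r) ^ (-β - 2 : ℝ)) :=
                mul_le_mul_of_nonneg_right (by linarith) (by positivity)
            _ = a r * (R - r) ^ (γ - α) * (B * (r / R) ^ 2 * (R - r) ^ (-β : ℝ)) ^ p := hexp
            _ ≤ a r * (R - r) ^ (γ - α) * (A + B * (r / R) ^ 2 * (R - r) ^ (-β)) ^ p :=
                mul_le_mul_of_nonneg_left hrp
                  (mul_nonneg harpos.le (Real.rpow_nonneg hs.le _))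
        · -- far from the boundary
          have hfar' : min δ R ≤ R - r := by
            push_neg at hnear
            rw [Real.dist_eq, abs_of_nonpos (by linarith : r - R ≤ 0)] at hnear
            exact le_trans (min_le_left _ _) (by linarith)
          have hX2b : (R - r) ^ (-β - 2 : ℝ) ≤ d2 := by
            rw [hd2def]
            exact Real.rpow_le_rpow_of_nonpos hδ'pos hfar' (by linarith)
          have hR2 : (0:ℝ) < R ^ 2 := by positivity
          have hq : r * (R - r) ≤ R ^ 2 := by
            rw [pow_two]
            exact mul_le_mul hrR.le (by linarith) hs.le hR.le
          have t1 : 2 * (N : ℝ) / R ^ 2 * (R - r) ^ 2 ≤ 2 * (N : ℝ) := by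
            rw [div_mul_eq_mul_div, div_le_iff₀ hR2]
            have hsq : (R - r) ^ 2 ≤ R ^ 2 := pow_le_pow_left₀ hs.le (by linarith) 2
            have hNn : (0:ℝ) ≤ 2 * (N : ℝ) := by positivity
            exact mul_le_mul_of_nonneg_left hsq hNn
          have t2 : r / R ^ 2 * c1 * (R - r) ≤ |c1| := by
            rw [div_mul_eq_mul_div, div_mul_eq_mul_div, div_le_iff₀ hR2]
            have u1 : c1 * (r * (R - r)) ≤ |c1| * (r * (R - r)) :=
              mul_le_mul_of_nonneg_right (le_abs_self c1) (mul_nonneg hr0'.le hs.le)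
            have u2 : |c1| * (r * (R - r)) ≤ |c1| * R ^ 2 :=
              mul_le_mul_of_nonneg_left hq (abs_nonneg c1)
            linarith [u1, u2]
          have t3 : r ^ 2 / R ^ 2 * (β * (β + 1 - α)) ≤ β * (β + 1 - α) := by
            rw [div_mul_eq_mul_div, div_le_iff₀ hR2]
            have hr2 : r ^ 2 ≤ R ^ 2 := pow_le_pow_left₀ hr0'.le hrR.le 2
            have := mul_le_mul_of_nonneg_right hr2 hbb.le
            linarith [this]
          have hTle : 2 * (N : ℝ) / R ^ 2 * (R - r) ^ 2 + r / R ^ 2 * c1 * (R - r) +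
              r ^ 2 / R ^ 2 * (β * (β + 1 - α)) ≤ Tb := by
            rw [hTbdef]; linarith
          have hMA : (Cfull / dd) ^ (1 / p) ≤ A := le_trans (le_max_right _ _) hA
          have hAp : Cfull / dd ≤ A ^ p := by
            have h := Real.rpow_le_rpow (Real.rpow_nonneg (by positivity) _) hMA hp0.le
            rwa [← Real.rpow_mul (by positivity : (0:ℝ) ≤ Cfull / dd), one_div,
              inv_mul_cancel₀ hp0.ne', Real.rpow_one] at h
          have hfinal2 : Cfull ≤ dd * A ^ p := (div_le_iff₀' hddpos).mp hAp
          have hψp : A ^ p ≤ (A + B * (r / R) ^ 2 * (R - r) ^ (-β)) ^ p := by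
            have : (0:ℝ) ≤ B * (r / R) ^ 2 * (R - r) ^ (-β : ℝ) := by positivity
            exact Real.rpow_le_rpow hApos.le (by linarith) hp0.le
          have hm2 : (min δ R) ^ (γ - α) ≤ (R - r) ^ (γ - α) :=
            Real.rpow_le_rpow hδ'pos.le hfar' hγα
          calc (2 * (N : ℝ) / R ^ 2 * (R - r) ^ 2 + r / R ^ 2 * c1 * (R - r) +
                r ^ 2 / R ^ 2 * (β * (β + 1 - α))) * (B * (R - r) ^ (-β - 2 : ℝ))
              ≤ Tb * (B * (R - r) ^ (-β - 2 : ℝ)) :=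
                mul_le_mul_of_nonneg_right hTle (by positivity)
            _ ≤ Tb * (B * d2) :=
                mul_le_mul_of_nonneg_left
                  (mul_le_mul_of_nonneg_left hX2b hBpos.le) hTbpos.le
            _ = Cfull := by rw [hCfulldef]
            _ ≤ dd * A ^ p := hfinal2
            _ = a r0 * (min δ R) ^ (γ - α) * A ^ p := by rw [hdddef]
            _ ≤ a r * (R - r) ^ (γ - α) * (A + B * (r / R) ^ 2 * (R - r) ^ (-β)) ^ p := by
                apply mul_le_mul
                · exact mul_le_mul (hr0min ⟨hr0'.le, hrR.le⟩) hm2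
                    (Real.rpow_nonneg hδ'pos.le _) harpos.le
                · exact hψp
                · positivity
                · exact mul_nonneg harpos.le (Real.rpow_nonneg hs.le _)
end

section
/- Fix an integer N ≥ 1, reals p > 1, R > 0, and α, γ with γ − α ≥ 0, a continuous function a : [0,R] → ℝ with a(r) > 0 for all r, set β := (2+γ−α)/(p−1), and assume β + 1 − α > 0 and (3+N)β ≥ 2α; set K := (β(β+1−α)/a(R))^{1/(p−1)}. For each ε ∈ (0,1), set B̲ := (1−ε) K. Then there exist C < 0 and c̄ ∈ (0,R) such that the function φ(r) := C + B̲ (r/R)² (R−r)^{−β} satisfies φ(r) < 0 for r ∈ [0, c̄), φ(c̄) = 0, and φ″(r) + ((N−1)/r − α/(R−r)) φ′(r) ≥ a(r)(R−r)^{γ−α} φ(r)^p for all r ∈ (c̄, R). -/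
open Set Filter Topology

private lemma rpow_sub_hasDerivAt (R c r : ℝ) (hr : r < R) :
    HasDerivAt (fun s => (R - s) ^ c) (-c * (R - r) ^ (c - 1)) r := by
  have hE : R - r ≠ 0 := by
    have : 0 < R - r := by linarith
    exact this.ne'
  have h1 : HasDerivAt (fun s : ℝ => R - s) (-1) r := by
    simpa using (hasDerivAt_id r).const_sub R
  have h2 := (Real.hasDerivAt_rpow_const (x := R - r) (p := c) (Or.inl hE)).comp r h1
  rw [show -c * (R - r) ^ (c - 1) = c * (R - r) ^ (c - 1) * (-1) by ring]
  exact h2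

private lemma phi_hasDerivAt (C B β R r : ℝ) (hR : R ≠ 0) (hr : r < R) :
    HasDerivAt (fun s => C + B * (s / R) ^ 2 * (R - s) ^ (-β))
      (B / R ^ 2 * (2 * r * (R - r) ^ (-β) + β * r ^ 2 * (R - r) ^ (-β - 1))) r := by
  have h1 : HasDerivAt (fun s : ℝ => (R - s) ^ (-β)) (β * (R - r) ^ (-β - 1)) r := by
    have := rpow_sub_hasDerivAt R (-β) r hr
    simpa using this
  have h2 : HasDerivAt (fun s : ℝ => (s / R) ^ 2) (2 * (r / R) ^ 1 * (1 / R)) r := by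
    simpa using ((hasDerivAt_id r).div_const R).fun_pow 2
  have h3 := (((h2.const_mul B).fun_mul h1).const_add C)
  refine h3.congr_deriv ?_
  field_simp

private lemma phi1_hasDerivAt (B β R r : ℝ) (hr : r < R) :
    HasDerivAt (fun s => B / R ^ 2 * (2 * s * (R - s) ^ (-β) + β * s ^ 2 * (R - s) ^ (-β - 1)))
      (B / R ^ 2 * (2 * (R - r) ^ (-β) + 4 * β * r * (R - r) ^ (-β - 1)
        + β * (β + 1) * r ^ 2 * (R - r) ^ (-β - 2))) r := by
  have h1 : HasDerivAt (fun s : ℝ => (R - s) ^ (-β)) (β * (R - r) ^ (-β - 1)) r := by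
    simpa using rpow_sub_hasDerivAt R (-β) r hr
  have h2 : HasDerivAt (fun s : ℝ => (R - s) ^ (-β - 1)) ((β + 1) * (R - r) ^ (-β - 2)) r := by
    have h := rpow_sub_hasDerivAt R (-β - 1) r hr
    rw [show (-β - 1) - 1 = -β - 2 by ring, show -(-β - 1) = β + 1 by ring] at h
    exact h
  have ha : HasDerivAt (fun s : ℝ => 2 * s) 2 r := by
    simpa using (hasDerivAt_id r).const_mul 2
  have hb : HasDerivAt (fun s : ℝ => β * s ^ 2) (β * (2 * r ^ 1)) r := by
    exact (hasDerivAt_pow 2 r).const_mul β |>.congr_deriv (by push_cast; ring)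
  have h := (((ha.fun_mul h1).fun_add (hb.fun_mul h2)).const_mul (B / R ^ 2))
  refine h.congr_deriv ?_
  ring

set_option maxHeartbeats 1000000 in
/-- Existence of a subsolution profile: with `β = (2+γ−α)/(p−1)`, `β+1−α > 0`,
`(3+N)β ≥ 2α`, `K = (β(β+1−α)/a(R))^{1/(p−1)}` and `B̲ = (1−ε)K`, there exist `C < 0`
and `c̄ ∈ (0,R)` such that `φ(r) = C + B̲(r/R)²(R−r)^{−β}` is negative on `[0,c̄)`,
vanishes at `c̄`, and satisfies the reversed inequality
`φ″ + ((N−1)/r − α/(R−r))φ′ ≥ a(r)(R−r)^{γ−α}φ^p` on `(c̄,R)`. -/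
theorem exists_subsolution
    (N : ℕ) (hN : 1 ≤ N) (p R α γ : ℝ) (hp : 1 < p) (hR : 0 < R) (hγα : 0 ≤ γ - α)
    (a : ℝ → ℝ) (ha_cont : ContinuousOn a (Icc 0 R)) (ha_pos : ∀ r ∈ Icc 0 R, 0 < a r)
    (β : ℝ) (hβ : β = (2 + γ - α) / (p - 1)) (hβα : 0 < β + 1 - α)
    (hβα2 : (3 + (N : ℝ)) * β ≥ 2 * α)
    (K : ℝ) (hK : K = (β * (β + 1 - α) / a R) ^ (1 / (p - 1))) :
    ∀ ε ∈ Ioo (0 : ℝ) 1, ∃ C < (0 : ℝ), ∃ cbar ∈ Ioo (0 : ℝ) R,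
      (∀ r ∈ Ico 0 cbar, C + (1 - ε) * K * (r / R) ^ 2 * (R - r) ^ (-β) < 0) ∧
      C + (1 - ε) * K * (cbar / R) ^ 2 * (R - cbar) ^ (-β) = 0 ∧
      (∀ r ∈ Ioo cbar R,
        deriv (deriv (fun s => C + (1 - ε) * K * (s / R) ^ 2 * (R - s) ^ (-β))) r
            + (((N : ℝ) - 1) / r - α / (R - r)) *
                deriv (fun s => C + (1 - ε) * K * (s / R) ^ 2 * (R - s) ^ (-β)) r
          ≥ a r * (R - r) ^ (γ - α) *
              (C + (1 - ε) * K * (r / R) ^ 2 * (R - r) ^ (-β)) ^ p) := by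
  intro ε hε
  obtain ⟨hε0, hε1⟩ := hε
  have hp1 : (0:ℝ) < p - 1 := by linarith
  have hβpos : 0 < β := by
    rw [hβ]; exact div_pos (by linarith) hp1
  have haR : 0 < a R := ha_pos R ⟨hR.le, le_refl R⟩
  have hKpos : 0 < K := by
    rw [hK]; exact Real.rpow_pos_of_pos (by positivity) _
  set B := (1 - ε) * K with hB
  have hBpos : 0 < B := mul_pos (by linarith) hKpos
  clear_value B
  -- strict monotonicity of the profile on [0, R)
  have hw : ∀ r s : ℝ, 0 ≤ r → r < s → s < R →
      (r / R) ^ 2 * (R - r) ^ (-β) < (s / R) ^ 2 * (R - s) ^ (-β) := by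
    intro r s h0 hrs hsR
    have hEr : 0 < R - r := by linarith
    have hEs : 0 < R - s := by linarith
    have hq : r / R < s / R := by gcongr
    have h1 : (r / R) ^ 2 < (s / R) ^ 2 := by
      apply pow_lt_pow_left₀ hq (by positivity) two_ne_zero
    have h2 : 0 < (R - s) ^ (-β) := Real.rpow_pos_of_pos hEs _
    have h3 : (R - r) ^ (-β) ≤ (R - s) ^ (-β) :=
      Real.rpow_le_rpow_of_nonpos hEs (by linarith) (by linarith)
    calc (r / R) ^ 2 * (R - r) ^ (-β) ≤ (r / R) ^ 2 * (R - s) ^ (-β) := by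
          exact mul_le_mul_of_nonneg_left h3 (by positivity)
      _ < (s / R) ^ 2 * (R - s) ^ (-β) := mul_lt_mul_of_pos_right h1 h2
  -- choice of cbar via continuity of a at R
  have hpe : 0 < (1 - ε) ^ (p - 1) := Real.rpow_pos_of_pos (by linarith) _
  have hpe1 : (1 - ε) ^ (p - 1) < 1 :=
    Real.rpow_lt_one (by linarith) (by linarith) hp1
  have hM : a R < a R / (1 - ε) ^ (p - 1) := by
    rw [lt_div_iff₀ hpe]; nlinarith
  have hcont : ∀ᶠ r in 𝓝[Icc (0:ℝ) R] R, a r < a R / (1 - ε) ^ (p - 1) :=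
    Filter.Tendsto.eventually_lt_const hM (ha_cont R ⟨hR.le, le_refl R⟩)
  obtain ⟨δ, hδ, hsub⟩ := Metric.mem_nhdsWithin_iff.mp hcont
  set cbar := max (R - δ / 2) (R / 2) with hcbar
  have hc1 : cbar < R := max_lt (by linarith) (by linarith)
  have hc0 : 0 < cbar := lt_of_lt_of_le (by linarith) (le_max_right _ _)
  have hacb : ∀ r, cbar < r → r < R → a r < a R / (1 - ε) ^ (p - 1) := by
    intro r h1 h2
    have hrc : R - δ / 2 ≤ cbar := le_max_left _ _
    apply hsub
    constructor
    · rw [Metric.mem_ball, Real.dist_eq, abs_of_nonpos (by linarith)]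
      linarith
    · exact ⟨by linarith, h2.le⟩
  refine ⟨-(B * (cbar / R) ^ 2 * (R - cbar) ^ (-β)), ?_, cbar, ⟨hc0, hc1⟩, ?_, by ring, ?_⟩
  · have : 0 < B * (cbar / R) ^ 2 * (R - cbar) ^ (-β) :=
      mul_pos (mul_pos hBpos (pow_pos (div_pos hc0 hR) 2))
        (Real.rpow_pos_of_pos (by linarith) _)
    linarith
  · -- negativity on [0, cbar)
    intro r ⟨hr0, hrc⟩
    have h' := mul_lt_mul_of_pos_left (hw r cbar hr0 hrc hc1) hBpos
    rw [← mul_assoc, ← mul_assoc] at h'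
    linarith
  · -- the differential inequality on (cbar, R)
    intro r ⟨hcr, hrR⟩
    set C := -(B * (cbar / R) ^ 2 * (R - cbar) ^ (-β)) with hC
    clear_value C
    have hr0 : 0 < r := hc0.trans hcr
    have hEr : 0 < R - r := by linarith
    have hupos : 0 < (R - r) ^ (-β - 2) := Real.rpow_pos_of_pos hEr _
    have harpos : 0 < a r := ha_pos r ⟨hr0.le, hrR.le⟩
    -- derivatives
    have hd1 : deriv (fun s => C + B * (s / R) ^ 2 * (R - s) ^ (-β)) r
        = B / R ^ 2 * (2 * r * (R - r) ^ (-β) + β * r ^ 2 * (R - r) ^ (-β - 1)) :=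
      (phi_hasDerivAt C B β R r hR.ne' hrR).deriv
    have hEqF : deriv (fun s => C + B * (s / R) ^ 2 * (R - s) ^ (-β)) =ᶠ[𝓝 r]
        (fun s => B / R ^ 2 * (2 * s * (R - s) ^ (-β) + β * s ^ 2 * (R - s) ^ (-β - 1))) := by
      filter_upwards [Iio_mem_nhds hrR] with s hs
      exact (phi_hasDerivAt C B β R s hR.ne' hs).deriv
    have hd2 : deriv (deriv (fun s => C + B * (s / R) ^ 2 * (R - s) ^ (-β))) r
        = B / R ^ 2 * (2 * (R - r) ^ (-β) + 4 * β * r * (R - r) ^ (-β - 1)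
            + β * (β + 1) * r ^ 2 * (R - r) ^ (-β - 2)) := by
      rw [hEqF.deriv_eq]; exact (phi1_hasDerivAt B β R r hrR).deriv
    rw [hd1, hd2]
    -- exponent splitting
    have e0 : (R - r) ^ (-β) = (R - r) ^ (-β - 2) * (R - r) ^ 2 := by
      rw [← Real.rpow_natCast (R - r) 2, ← Real.rpow_add hEr]
      norm_num
    have e1 : (R - r) ^ (-β - 1) = (R - r) ^ (-β - 2) * (R - r) := by
      rw [show (-β - 1 : ℝ) = (-β - 2) + 1 by ring, Real.rpow_add hEr, Real.rpow_one]
    -- LHS identity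
    have hLHS : B / R ^ 2 * (2 * (R - r) ^ (-β) + 4 * β * r * (R - r) ^ (-β - 1)
            + β * (β + 1) * r ^ 2 * (R - r) ^ (-β - 2))
        + (((N : ℝ) - 1) / r - α / (R - r)) *
            (B / R ^ 2 * (2 * r * (R - r) ^ (-β) + β * r ^ 2 * (R - r) ^ (-β - 1)))
        = B / R ^ 2 * (R - r) ^ (-β - 2) *
            (2 * N * (R - r) ^ 2 + ((3 + (N : ℝ)) * β - 2 * α) * (r * (R - r))
              + β * (β + 1 - α) * r ^ 2) := by
      rw [e0, e1]
      field_simp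
      ring
    -- lower bound of LHS
    have hlow : B / R ^ 2 * (R - r) ^ (-β - 2) *
          (2 * N * (R - r) ^ 2 + ((3 + (N : ℝ)) * β - 2 * α) * (r * (R - r))
            + β * (β + 1 - α) * r ^ 2)
        ≥ (β * (β + 1 - α) * B) * ((r / R) ^ 2) * ((R - r) ^ (-β - 2)) := by
      have hAr : (β * (β + 1 - α) * B) * ((r / R) ^ 2) * ((R - r) ^ (-β - 2))
          = B / R ^ 2 * (R - r) ^ (-β - 2) * (β * (β + 1 - α) * r ^ 2) := by
        field_simp
      rw [hAr]
      have hApos : 0 < B / R ^ 2 := by positivity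
      have t1 : (0:ℝ) ≤ 2 * N * (R - r) ^ 2 := by positivity
      have t2 : (0:ℝ) ≤ ((3 + (N : ℝ)) * β - 2 * α) * (r * (R - r)) :=
        mul_nonneg (by linarith) (by positivity)
      have hAu : (0:ℝ) ≤ B / R ^ 2 * (R - r) ^ (-β - 2) := (mul_pos hApos hupos).le
      have h1 := mul_nonneg hAu t1
      have h2 := mul_nonneg hAu t2
      rw [mul_add, mul_add]
      linarith
    -- positivity and comparison of φ
    have hφpos : 0 < C + B * (r / R) ^ 2 * (R - r) ^ (-β) := by
      have h' := mul_lt_mul_of_pos_left (hw cbar r hc0.le hcr hrR) hBpos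
      rw [← mul_assoc, ← mul_assoc] at h'
      rw [hC]; linarith
    have hCneg : C < 0 := by
      rw [hC]
      have : 0 < B * (cbar / R) ^ 2 * (R - cbar) ^ (-β) :=
        mul_pos (mul_pos hBpos (pow_pos (div_pos hc0 hR) 2))
          (Real.rpow_pos_of_pos (by linarith) _)
      linarith
    have hφle : C + B * (r / R) ^ 2 * (R - r) ^ (-β) ≤ B * (r / R) ^ 2 * (R - r) ^ (-β) := by
      linarith
    have hgpow : (C + B * (r / R) ^ 2 * (R - r) ^ (-β)) ^ p
        ≤ (B * (r / R) ^ 2 * (R - r) ^ (-β)) ^ p :=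
      Real.rpow_le_rpow hφpos.le hφle (by linarith)
    have hgeq : (B * (r / R) ^ 2 * (R - r) ^ (-β)) ^ p
        = B ^ p * (r / R) ^ (2 * p) * (R - r) ^ (-β * p) := by
      rw [Real.mul_rpow (by positivity) (by positivity),
        Real.mul_rpow hBpos.le (by positivity)]
      congr 1
      · congr 1
        rw [← Real.rpow_natCast (r / R) 2, ← Real.rpow_mul (by positivity)]
        norm_num
      · rw [← Real.rpow_mul hEr.le]
    have hβ' : β * (p - 1) = 2 + γ - α := by
      rw [hβ]; field_simp
    have hexp : (R - r) ^ (γ - α) * (R - r) ^ (-β * p) = (R - r) ^ (-β - 2) := by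
      rw [← Real.rpow_add hEr]
      congr 1
      linear_combination -hβ'
    have hmono : (r / R) ^ (2 * p) ≤ ((r / R) : ℝ) ^ (2:ℕ) := by
      have h1 : (r / R) ^ (2 * p) ≤ (r / R) ^ ((2:ℝ)) :=
        Real.rpow_le_rpow_of_exponent_ge (by positivity) (by
          rw [div_le_one hR]; exact hrR.le) (by linarith)
      rwa [show ((2:ℝ)) = ((2:ℕ):ℝ) by norm_num, Real.rpow_natCast] at h1
    have hKp : K ^ (p - 1) = β * (β + 1 - α) / a R := by
      rw [hK, ← Real.rpow_mul (by positivity), one_div, inv_mul_cancel₀ hp1.ne',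
        Real.rpow_one]
    have hBp1 : B ^ (p - 1) = (1 - ε) ^ (p - 1) * K ^ (p - 1) := by
      rw [hB, Real.mul_rpow (by linarith) hKpos.le]
    have hkey : a r * B ^ (p - 1) ≤ β * (β + 1 - α) := by
      rw [hBp1, hKp]
      have har2 : a r * (1 - ε) ^ (p - 1) ≤ a R := by
        have := hacb r hcr hrR
        rw [lt_div_iff₀ hpe] at this; linarith
      calc a r * ((1 - ε) ^ (p - 1) * (β * (β + 1 - α) / a R))
          = (a r * (1 - ε) ^ (p - 1)) * (β * (β + 1 - α)) / a R := by ring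
        _ ≤ a R * (β * (β + 1 - α)) / a R := by gcongr
        _ = β * (β + 1 - α) := by field_simp
    have hBp : B ^ p = B ^ (p - 1) * B := by
      have h := Real.rpow_add hBpos (p - 1) 1
      rw [Real.rpow_one, sub_add_cancel] at h
      exact h
    have hRHS : a r * (R - r) ^ (γ - α) * (C + B * (r / R) ^ 2 * (R - r) ^ (-β)) ^ p
        ≤ (β * (β + 1 - α) * B) * ((r / R) ^ 2) * ((R - r) ^ (-β - 2)) := by
      calc a r * (R - r) ^ (γ - α) * (C + B * (r / R) ^ 2 * (R - r) ^ (-β)) ^ p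
          ≤ a r * (R - r) ^ (γ - α) * (B ^ p * (r / R) ^ (2 * p) * (R - r) ^ (-β * p)) := by
            rw [← hgeq]
            exact mul_le_mul_of_nonneg_left hgpow (by positivity)
        _ = (a r * B ^ p) * ((r / R) ^ (2 * p)) * ((R - r) ^ (γ - α) * (R - r) ^ (-β * p)) := by
            ring
        _ = (a r * B ^ p) * ((r / R) ^ (2 * p)) * ((R - r) ^ (-β - 2)) := by rw [hexp]
        _ ≤ (a r * B ^ p) * ((r / R) ^ 2) * ((R - r) ^ (-β - 2)) := by
            apply mul_le_mul_of_nonneg_right _ hupos.le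
            apply mul_le_mul_of_nonneg_left hmono (by positivity)
        _ ≤ (β * (β + 1 - α) * B) * ((r / R) ^ 2) * ((R - r) ^ (-β - 2)) := by
            apply mul_le_mul_of_nonneg_right _ hupos.le
            apply mul_le_mul_of_nonneg_right _ (by positivity)
            rw [hBp, ← mul_assoc]
            exact mul_le_mul_of_nonneg_right hkey hBpos.le
    calc a r * (R - r) ^ (γ - α) * (C + B * (r / R) ^ 2 * (R - r) ^ (-β)) ^ p
        ≤ (β * (β + 1 - α) * B) * ((r / R) ^ 2) * ((R - r) ^ (-β - 2)) := hRHS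
      _ ≤ B / R ^ 2 * (R - r) ^ (-β - 2) *
            (2 * N * (R - r) ^ 2 + ((3 + (N : ℝ)) * β - 2 * α) * (r * (R - r))
              + β * (β + 1 - α) * r ^ 2) := hlow
      _ = _ := hLHS.symm
end
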